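/- Let P(λ) = [[A(λ), B(λ)], [-C(λ), D(λ)]] be a polynomial system matrix with transfer function G(λ). Suppose A(λ) and C(λ) are right coprime and A(λ)^{-1}B(λ) is a proper rational matrix. If [H_1(λ); H_2(λ)] is a right minimal basis of P(λ), then H_2(λ) is a right minimal basis of G(λ), H_1(λ) = -A(λ)^{-1}B(λ)H_2(λ), and the right minimal indices of P(λ) and G(λ) coincide. -/

import Mathlib

/-!
Write `R = A⁻¹ B`. A vector `(x, y)` lies in the right null space of `P` exactly when `G y = 0`
and `x = -R y`, so `y ↦ (-R y, y)` maps `N_r(G)` isomorphically onto `N_r(P)`, and the polynomial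
bases `[H₁; H₂]` of `N_r(P)` are exactly the `[-R H₂; H₂]` with `H₂` a polynomial basis of
`N_r(G)` for which `-R H₂` is polynomial. Every polynomial basis `N` of `N_r(G)` qualifies: from
a Bézout identity `X A + Y C = 1` one gets `-R N = (Y D - X B) N`. Since `R` is proper, its
entries have valuation at most `1` at infinity, so `-R H₂` has no entry of larger degree than the
corresponding column of `H₂`; the correspondence therefore preserves column degrees, and with
them minimality and the minimal indices.
-/

open Polynomial Matrix

noncomputable section

variable {F : Type*} [Field F]

/-- The natural embedding of a polynomial matrix into the rational functions. -/
def toRF {a b : Type*} (M : Matrix a b (Polynomial F)) : Matrix a b (RatFunc F) :=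
  M.map (algebraMap (Polynomial F) (RatFunc F))

/-- A rational function is proper if the degree of its numerator is at most that of its
denominator. -/
def IsProperRat (r : RatFunc F) : Prop := r.num.degree ≤ r.denom.degree

/-- Degree (as a natural number) of the `j`-th column of a polynomial matrix. -/
def colDegNat {a : Type*} [Fintype a] {l : ℕ} (N : Matrix a (Fin l) (Polynomial F))
    (j : Fin l) : ℕ :=
  Finset.univ.sup fun i => (N i j).natDegree

/-- The order of a polynomial matrix: the sum of its column degrees. -/
def matOrder {a : Type*} [Fintype a] {l : ℕ} (N : Matrix a (Fin l) (Polynomial F)) : ℕ :=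
  ∑ j, colDegNat N j

/-- The multiset of column degrees of a polynomial matrix. -/
def colDegs {a : Type*} [Fintype a] {l : ℕ} (N : Matrix a (Fin l) (Polynomial F)) : Multiset ℕ :=
  Finset.univ.val.map fun j => colDegNat N j

/-- The columns of the polynomial matrix `N`, regarded as rational vectors, form a basis of
the right null-space of the rational matrix `M`. -/
def IsRightPolyBasis {a b : Type*} [Fintype a] [Fintype b] {l : ℕ}
    (M : Matrix a b (RatFunc F)) (N : Matrix b (Fin l) (Polynomial F)) : Prop :=
  LinearIndependent (RatFunc F) (fun j : Fin l => (toRF N)ᵀ j) ∧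
    Submodule.span (RatFunc F) (Set.range fun j : Fin l => (toRF N)ᵀ j) =
      LinearMap.ker M.mulVecLin

/-- The columns of the polynomial matrix `N` form a basis of the left null-space of `M`. -/
def IsLeftPolyBasis {a b : Type*} [Fintype a] [Fintype b] {l : ℕ}
    (M : Matrix a b (RatFunc F)) (N : Matrix a (Fin l) (Polynomial F)) : Prop :=
  LinearIndependent (RatFunc F) (fun j : Fin l => (toRF N)ᵀ j) ∧
    Submodule.span (RatFunc F) (Set.range fun j : Fin l => (toRF N)ᵀ j) =
      LinearMap.ker M.vecMulLinear

/-- A right minimal basis: a right polynomial basis of least order. -/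
def IsRightMinimalBasis {a b : Type*} [Fintype a] [Fintype b] {l : ℕ}
    (M : Matrix a b (RatFunc F)) (N : Matrix b (Fin l) (Polynomial F)) : Prop :=
  IsRightPolyBasis M N ∧
    ∀ (l' : ℕ) (N' : Matrix b (Fin l') (Polynomial F)), IsRightPolyBasis M N' →
      matOrder N ≤ matOrder N'

/-- A left minimal basis: a left polynomial basis of least order. -/
def IsLeftMinimalBasis {a b : Type*} [Fintype a] [Fintype b] {l : ℕ}
    (M : Matrix a b (RatFunc F)) (N : Matrix a (Fin l) (Polynomial F)) : Prop :=
  IsLeftPolyBasis M N ∧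
    ∀ (l' : ℕ) (N' : Matrix a (Fin l') (Polynomial F)), IsLeftPolyBasis M N' →
      matOrder N ≤ matOrder N'

/-- `s` is the multiset of right minimal indices of `M`. -/
def HasRightMinimalIndices {a b : Type*} [Fintype a] [Fintype b]
    (M : Matrix a b (RatFunc F)) (s : Multiset ℕ) : Prop :=
  ∃ (l : ℕ) (N : Matrix b (Fin l) (Polynomial F)), IsRightMinimalBasis M N ∧ colDegs N = s

/-- `s` is the multiset of left minimal indices of `M`. -/
def HasLeftMinimalIndices {a b : Type*} [Fintype a] [Fintype b]
    (M : Matrix a b (RatFunc F)) (s : Multiset ℕ) : Prop :=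
  ∃ (l : ℕ) (N : Matrix a (Fin l) (Polynomial F)), IsLeftMinimalBasis M N ∧ colDegs N = s

section ToRF

variable {a b c d : Type*}

lemma toRF_mul [Fintype b] (M : Matrix a b F[X]) (N : Matrix b c F[X]) :
    toRF (M * N) = toRF M * toRF N :=
  Matrix.map_mul

lemma toRF_add (M N : Matrix a b F[X]) : toRF (M + N) = toRF M + toRF N :=
  Matrix.map_add _ (map_add _) M N

lemma toRF_sub (M N : Matrix a b F[X]) : toRF (M - N) = toRF M - toRF N :=
  Matrix.map_sub _ (map_sub _) M N

lemma toRF_neg (M : Matrix a b F[X]) : toRF (-M) = -toRF M :=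
  Matrix.map_neg _ (map_neg _) M

lemma toRF_one [DecidableEq a] : toRF (1 : Matrix a a F[X]) = 1 :=
  Matrix.map_one _ (map_zero _) (map_one _)

lemma toRF_fromBlocks (A : Matrix a b F[X]) (B : Matrix a c F[X]) (C : Matrix d b F[X])
    (D : Matrix d c F[X]) :
    toRF (fromBlocks A B C D) = fromBlocks (toRF A) (toRF B) (toRF C) (toRF D) :=
  fromBlocks_map A B C D _

lemma toRF_fromRows_col {l : ℕ} (H₁ : Matrix a (Fin l) F[X]) (H₂ : Matrix b (Fin l) F[X])
    (j : Fin l) : (toRF (fromRows H₁ H₂))ᵀ j = (toRF H₁)ᵀ j ⊕ᵥ (toRF H₂)ᵀ j := by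
  funext i
  cases i <;> rfl

lemma isUnit_det_toRF [Fintype a] [DecidableEq a] {A : Matrix a a F[X]} (hA : A.det ≠ 0) :
    IsUnit (toRF A).det := by
  rw [toRF, ← RingHom.mapMatrix_apply, ← RingHom.map_det, isUnit_iff_ne_zero]
  exact (map_ne_zero_iff _ (RatFunc.algebraMap_injective F)).2 hA

end ToRF

section SystemMatrix

variable {K : Type*} [CommRing K] {a b c e : Type*} [Fintype a] [DecidableEq a] [Fintype b]
  {A : Matrix a a K} {B : Matrix a b K} {C : Matrix c a K} {D : Matrix c b K}

theorem mulVec_add_mulVec_eq_zero_iff (hA : IsUnit A.det) (x : a → K) (y : b → K) :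
    A *ᵥ x + B *ᵥ y = 0 ↔ x = -((A⁻¹ * B) *ᵥ y) := by
  constructor
  · intro h
    rw [← mulVec_mulVec, ← mulVec_neg, ← eq_neg_of_add_eq_zero_left h, mulVec_mulVec,
      nonsing_inv_mul _ hA, one_mulVec]
  · rintro rfl
    rw [mulVec_neg, mulVec_mulVec, mul_nonsing_inv_cancel_left _ _ hA, neg_add_cancel]

theorem fromBlocks_mulVec_sumElim_eq_zero_iff (hA : IsUnit A.det) (x : a → K) (y : b → K) :
    fromBlocks A B (-C) D *ᵥ (x ⊕ᵥ y) = 0 ↔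
      (D + C * A⁻¹ * B) *ᵥ y = 0 ∧ x = -((A⁻¹ * B) *ᵥ y) := by
  rw [fromBlocks_mulVec, Sum.elim_comp_inl, Sum.elim_comp_inr, ← Sum.elim_zero_zero,
    Sum.elim_eq_iff, mulVec_add_mulVec_eq_zero_iff hA]
  refine and_comm.trans (and_congr_left fun hx => ?_)
  rw [hx, neg_mulVec, mulVec_neg, neg_neg, mulVec_mulVec, add_mulVec, Matrix.mul_assoc, add_comm]

theorem sub_mul_eq_neg_inv_mul_mul [Fintype c] (hA : IsUnit A.det) {X : Matrix a a K}
    {Y : Matrix a c K} (hXY : X * A + Y * C = 1) {N : Matrix b e K}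
    (hN : (D + C * A⁻¹ * B) * N = 0) :
    (Y * D - X * B) * N = -(A⁻¹ * B * N) := by
  have hDN : D * N = -(C * (A⁻¹ * B * N)) := by
    rw [← Matrix.mul_assoc, ← Matrix.mul_assoc, eq_neg_iff_add_eq_zero, ← Matrix.add_mul, hN]
  have hBN : A * (A⁻¹ * B * N) = B * N := by
    rw [Matrix.mul_assoc, mul_nonsing_inv_cancel_left _ _ hA]
  calc (Y * D - X * B) * N = Y * (D * N) - X * (A * (A⁻¹ * B * N)) := by
        rw [hBN, Matrix.sub_mul, Matrix.mul_assoc, Matrix.mul_assoc]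
    _ = -((X * A + Y * C) * (A⁻¹ * B * N)) := by
        rw [hDN, Matrix.add_mul, Matrix.mul_neg, Matrix.mul_assoc X, Matrix.mul_assoc Y]; abel
    _ = -(A⁻¹ * B * N) := by rw [hXY, Matrix.one_mul]

end SystemMatrix

section Degree

open RatFunc WithZero

lemma inftyValuation_le_one_of_isProperRat [DecidableEq (RatFunc F)] {r : RatFunc F}
    (hr : IsProperRat r) : inftyValuation F r ≤ 1 := by
  rcases eq_or_ne r 0 with rfl | h0
  · simp
  rw [inftyValuation_apply, inftyValuation_of_nonzero F h0, ← exp_zero, exp_le_exp, intDegree,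
    sub_nonpos]
  exact_mod_cast natDegree_le_natDegree hr

lemma inftyValuation_algebraMap_le_exp_iff [DecidableEq (RatFunc F)] {q : F[X]} {d : ℕ} :
    inftyValuation F (algebraMap F[X] (RatFunc F) q) ≤ exp (d : ℤ) ↔ q.natDegree ≤ d := by
  rcases eq_or_ne q 0 with rfl | hq
  · simp
  rw [inftyValuation_apply, inftyValuation.polynomial F hq, exp_le_exp, Nat.cast_le]

theorem natDegree_le_colDegNat_of_toRF_eq_mul [DecidableEq (RatFunc F)] {a b : Type*}
    [Fintype b] {l : ℕ} {R : Matrix a b (RatFunc F)}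
    (hR : ∀ i k, inftyValuation F (R i k) ≤ 1)
    {K : Matrix a (Fin l) F[X]} {N : Matrix b (Fin l) F[X]} (hK : toRF K = R * toRF N)
    (i : a) (j : Fin l) : (K i j).natDegree ≤ colDegNat N j := by
  rw [← inftyValuation_algebraMap_le_exp_iff, show algebraMap F[X] (RatFunc F) (K i j) = _ from
    congrFun (congrFun hK i) j]
  refine Valuation.map_sum_le _ fun k _ => ?_
  rw [map_mul, ← one_mul (exp _)]
  exact mul_le_mul' (hR i k)
    (inftyValuation_algebraMap_le_exp_iff.2
      (Finset.le_sup (f := fun i => (N i j).natDegree) (Finset.mem_univ k)))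

theorem colDegNat_fromRows_eq {a b : Type*} [Fintype a] [Fintype b] {l : ℕ}
    {R : Matrix a b (RatFunc F)} (hR : ∀ i k, IsProperRat (R i k)) {H₁ : Matrix a (Fin l) F[X]}
    {H₂ : Matrix b (Fin l) F[X]} (h : toRF H₁ = -(R * toRF H₂)) (j : Fin l) :
    colDegNat (fromRows H₁ H₂) j = colDegNat H₂ j := by
  classical
  have hH₁ : ∀ i, (H₁ i j).natDegree ≤ colDegNat H₂ j :=
    fun i => natDegree_le_colDegNat_of_toRF_eq_mul (R := -R)
      (fun i k => by simpa using inftyValuation_le_one_of_isProperRat (hR i k))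
      (h.trans (Matrix.neg_mul _ _).symm) i j
  refine le_antisymm (Finset.sup_le ?_) (Finset.sup_le fun i _ => ?_)
  · rintro (i | i) -
    · exact hH₁ i
    · exact Finset.le_sup (f := fun i => (H₂ i j).natDegree) (Finset.mem_univ i)
  · exact Finset.le_sup (f := fun i => (fromRows H₁ H₂ i j).natDegree)
      (Finset.mem_univ (.inr i))

end Degree

section NullSpace

theorem linearIndependent_and_span_eq_map_iff {K V W ι : Type*} [Ring K] [AddCommGroup V]
    [Module K V] [AddCommGroup W] [Module K W] {f : V →ₗ[K] W} (hf : Function.Injective f)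
    (v : ι → V) (S : Submodule K V) :
    (LinearIndependent K (f ∘ v) ∧ Submodule.span K (Set.range (f ∘ v)) = S.map f) ↔
      (LinearIndependent K v ∧ Submodule.span K (Set.range v) = S) := by
  rw [LinearMap.linearIndependent_iff f (LinearMap.ker_eq_bot.2 hf), Set.range_comp,
    Submodule.span_image, (Submodule.map_injective_of_injective hf).eq_iff]

variable {a b c : Type*}

theorem IsRightPolyBasis.mulVec_col_eq_zero [Fintype b] [Fintype c]
    {M : Matrix c b (RatFunc F)} {l : ℕ} {N : Matrix b (Fin l) F[X]} (hN : IsRightPolyBasis M N)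
    (j : Fin l) :
    M *ᵥ (toRF N)ᵀ j = 0 :=
  LinearMap.mem_ker.1 (hN.2 ▸ Submodule.subset_span (Set.mem_range_self j))

theorem IsRightPolyBasis.mul_toRF_eq_zero [Fintype b] [Fintype c]
    {M : Matrix c b (RatFunc F)} {l : ℕ} {N : Matrix b (Fin l) F[X]} (hN : IsRightPolyBasis M N) :
    M * toRF N = 0 := by
  ext i j
  exact congrFun (hN.mulVec_col_eq_zero j) i

def negGraph [Fintype b] (R : Matrix a b (RatFunc F)) :
    (b → RatFunc F) →ₗ[RatFunc F] (a ⊕ b → RatFunc F) where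
  toFun y := -(R *ᵥ y) ⊕ᵥ y
  map_add' y z := by
    rw [mulVec_add, neg_add, ← Sum.elim_add_add]
  map_smul' t y := by
    rw [mulVec_smul, ← smul_neg, RingHom.id_apply]
    ext (i | i) <;> rfl

lemma negGraph_apply [Fintype b] (R : Matrix a b (RatFunc F)) (y : b → RatFunc F) :
    negGraph R y = -(R *ᵥ y) ⊕ᵥ y :=
  rfl

lemma negGraph_injective [Fintype b] (R : Matrix a b (RatFunc F)) :
    Function.Injective (negGraph R) :=
  fun _ _ h => (Sum.elim_eq_iff.1 h).2

end NullSpace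

section SystemMatrixBases

variable {a b c d : Type*} [Fintype a] [Fintype b]
  {P : Matrix c (a ⊕ b) (RatFunc F)} {G : Matrix d b (RatFunc F)} {R : Matrix a b (RatFunc F)}

theorem ker_mulVecLin_eq_map_negGraph
    (hker : ∀ x y, P *ᵥ (x ⊕ᵥ y) = 0 ↔ G *ᵥ y = 0 ∧ x = -(R *ᵥ y)) :
    LinearMap.ker P.mulVecLin = (LinearMap.ker G.mulVecLin).map (negGraph R) := by
  ext v
  obtain ⟨x, y, rfl⟩ : ∃ x y, v = x ⊕ᵥ y := ⟨_, _, (Sum.elim_comp_inl_inr v).symm⟩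
  rw [LinearMap.mem_ker, mulVecLin_apply, hker]
  constructor
  · rintro ⟨hy, rfl⟩
    exact ⟨y, hy, rfl⟩
  · rintro ⟨y', hy', hv⟩
    obtain ⟨rfl, rfl⟩ := Sum.elim_eq_iff.1 hv
    exact ⟨hy', rfl⟩

theorem isRightPolyBasis_fromRows_iff [Fintype c] [Fintype d]
    (hker : ∀ x y, P *ᵥ (x ⊕ᵥ y) = 0 ↔ G *ᵥ y = 0 ∧ x = -(R *ᵥ y)) {l : ℕ}
    {H₁ : Matrix a (Fin l) F[X]} {H₂ : Matrix b (Fin l) F[X]} :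
    IsRightPolyBasis P (fromRows H₁ H₂) ↔
      toRF H₁ = -(R * toRF H₂) ∧ IsRightPolyBasis G H₂ := by
  have hcols (h : toRF H₁ = -(R * toRF H₂)) :
      (fun j => (toRF (fromRows H₁ H₂))ᵀ j) = negGraph R ∘ fun j => (toRF H₂)ᵀ j := by
    funext j
    rw [Function.comp_apply, toRF_fromRows_col, negGraph_apply, h]
    rfl
  have hbasis (h : toRF H₁ = -(R * toRF H₂)) :
      IsRightPolyBasis P (fromRows H₁ H₂) ↔ IsRightPolyBasis G H₂ := by
    unfold IsRightPolyBasis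
    rw [ker_mulVecLin_eq_map_negGraph hker, hcols h,
      linearIndependent_and_span_eq_map_iff (negGraph_injective R)]
  refine ⟨fun hP => ?_, fun ⟨h, hG⟩ => (hbasis h).2 hG⟩
  have hH₁ : toRF H₁ = -(R * toRF H₂) := by
    ext i j
    have hj := hP.mulVec_col_eq_zero j
    rw [toRF_fromRows_col, hker] at hj
    exact congrFun hj.2 i
  exact ⟨hH₁, (hbasis hH₁).1 hP⟩

theorem exists_isRightPolyBasis_fromRows [Fintype c] [Fintype d]
    (hker : ∀ x y, P *ᵥ (x ⊕ᵥ y) = 0 ↔ G *ᵥ y = 0 ∧ x = -(R *ᵥ y))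
    (hlift : ∀ {l : ℕ} (N : Matrix b (Fin l) F[X]), G * toRF N = 0 →
      ∃ K : Matrix a (Fin l) F[X], toRF K = -(R * toRF N))
    {l : ℕ} {N : Matrix b (Fin l) F[X]} (hN : IsRightPolyBasis G N) :
    ∃ K : Matrix a (Fin l) F[X],
      toRF K = -(R * toRF N) ∧ IsRightPolyBasis P (fromRows K N) := by
  obtain ⟨K, hK⟩ := hlift N hN.mul_toRF_eq_zero
  exact ⟨K, hK, (isRightPolyBasis_fromRows_iff hker).2 ⟨hK, hN⟩⟩

theorem matOrder_fromRows_eq (hR : ∀ i k, IsProperRat (R i k)) {l : ℕ}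
    {H₁ : Matrix a (Fin l) F[X]} {H₂ : Matrix b (Fin l) F[X]}
    (h : toRF H₁ = -(R * toRF H₂)) :
    matOrder (fromRows H₁ H₂) = matOrder H₂ := by
  simp only [matOrder, colDegNat_fromRows_eq hR h]

theorem colDegs_fromRows_eq (hR : ∀ i k, IsProperRat (R i k)) {l : ℕ}
    {H₁ : Matrix a (Fin l) F[X]} {H₂ : Matrix b (Fin l) F[X]}
    (h : toRF H₁ = -(R * toRF H₂)) :
    colDegs (fromRows H₁ H₂) = colDegs H₂ := by
  simp only [colDegs, colDegNat_fromRows_eq hR h]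

theorem isRightMinimalBasis_fromRows_iff [Fintype c] [Fintype d]
    (hker : ∀ x y, P *ᵥ (x ⊕ᵥ y) = 0 ↔ G *ᵥ y = 0 ∧ x = -(R *ᵥ y))
    (hR : ∀ i k, IsProperRat (R i k))
    (hlift : ∀ {l : ℕ} (N : Matrix b (Fin l) F[X]), G * toRF N = 0 →
      ∃ K : Matrix a (Fin l) F[X], toRF K = -(R * toRF N))
    {l : ℕ} {H₁ : Matrix a (Fin l) F[X]} {H₂ : Matrix b (Fin l) F[X]} :
    IsRightMinimalBasis P (fromRows H₁ H₂) ↔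
      toRF H₁ = -(R * toRF H₂) ∧ IsRightMinimalBasis G H₂ := by
  constructor
  · rintro ⟨hP, hPmin⟩
    obtain ⟨hH₁, hG⟩ := (isRightPolyBasis_fromRows_iff hker).1 hP
    refine ⟨hH₁, hG, fun l' N hN => ?_⟩
    obtain ⟨K, hK, hKN⟩ := exists_isRightPolyBasis_fromRows hker hlift hN
    calc matOrder H₂ = matOrder (fromRows H₁ H₂) := (matOrder_fromRows_eq hR hH₁).symm
      _ ≤ matOrder (fromRows K N) := hPmin _ _ hKN
      _ = matOrder N := matOrder_fromRows_eq hR hK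
  · rintro ⟨hH₁, hG, hGmin⟩
    refine ⟨(isRightPolyBasis_fromRows_iff hker).2 ⟨hH₁, hG⟩, fun l' N hN => ?_⟩
    rw [← fromRows_toRows N] at hN ⊢
    obtain ⟨hN₁, hN₂⟩ := (isRightPolyBasis_fromRows_iff hker).1 hN
    calc matOrder (fromRows H₁ H₂) = matOrder H₂ := matOrder_fromRows_eq hR hH₁
      _ ≤ matOrder N.toRows₂ := hGmin _ _ hN₂
      _ = matOrder (fromRows N.toRows₁ N.toRows₂) := (matOrder_fromRows_eq hR hN₁).symm

theorem hasRightMinimalIndices_iff_of_negGraph [Fintype c] [Fintype d]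
    (hker : ∀ x y, P *ᵥ (x ⊕ᵥ y) = 0 ↔ G *ᵥ y = 0 ∧ x = -(R *ᵥ y))
    (hR : ∀ i k, IsProperRat (R i k))
    (hlift : ∀ {l : ℕ} (N : Matrix b (Fin l) F[X]), G * toRF N = 0 →
      ∃ K : Matrix a (Fin l) F[X], toRF K = -(R * toRF N))
    (s : Multiset ℕ) :
    HasRightMinimalIndices P s ↔ HasRightMinimalIndices G s := by
  constructor
  · rintro ⟨l, N, hN, rfl⟩
    rw [← fromRows_toRows N] at hN ⊢
    obtain ⟨hN₁, hN₂⟩ := (isRightMinimalBasis_fromRows_iff hker hR hlift).1 hN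
    exact ⟨l, N.toRows₂, hN₂, (colDegs_fromRows_eq hR hN₁).symm⟩
  · rintro ⟨l, N, hN, rfl⟩
    obtain ⟨K, hK, -⟩ := exists_isRightPolyBasis_fromRows hker hlift hN.1
    exact ⟨l, fromRows K N, (isRightMinimalBasis_fromRows_iff hker hR hlift).2 ⟨hK, hN⟩,
      colDegs_fromRows_eq hR hK⟩

end SystemMatrixBases

/-- Let `P = [[A,B],[-C,D]]` be a polynomial system matrix with transfer
function `G = D + C A⁻¹ B`.  If `A` and `C` are right coprime and `A⁻¹ B` is proper, and
`[H₁;H₂]` is a right minimal basis of `P`, then `H₂` is a right minimal basis of `G`,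
`H₁ = -A⁻¹ B H₂`, and the right minimal indices of `P` and `G` coincide. -/
theorem rightMinimalBasis_transfer_of_rightMinimalBasis_psm
    {n p m l : ℕ}
    (A : Matrix (Fin n) (Fin n) (Polynomial F))
    (B : Matrix (Fin n) (Fin m) (Polynomial F))
    (C : Matrix (Fin p) (Fin n) (Polynomial F))
    (D : Matrix (Fin p) (Fin m) (Polynomial F))
    (hA : A.det ≠ 0)
    (hcoprime : ∃ (X : Matrix (Fin n) (Fin n) (Polynomial F))
        (Y : Matrix (Fin n) (Fin p) (Polynomial F)), X * A + Y * C = 1)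
    (hproper : ∀ i j, IsProperRat (((toRF A)⁻¹ * toRF B) i j))
    (G : Matrix (Fin p) (Fin m) (RatFunc F))
    (hG : G = toRF D + toRF C * (toRF A)⁻¹ * toRF B)
    (P : Matrix (Fin n ⊕ Fin p) (Fin n ⊕ Fin m) (RatFunc F))
    (hP : P = toRF (Matrix.fromBlocks A B (-C) D))
    (H₁ : Matrix (Fin n) (Fin l) (Polynomial F))
    (H₂ : Matrix (Fin m) (Fin l) (Polynomial F))
    (hmin : IsRightMinimalBasis P (Matrix.fromRows H₁ H₂)) :
    IsRightMinimalBasis G H₂ ∧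
    toRF H₁ = -((toRF A)⁻¹ * toRF B * toRF H₂) ∧
    (∀ s : Multiset ℕ, HasRightMinimalIndices P s ↔ HasRightMinimalIndices G s) := by
  obtain ⟨X, Y, hXY⟩ := hcoprime
  have hAu : IsUnit (toRF A).det := isUnit_det_toRF hA
  have hker : ∀ x y,
      P *ᵥ (x ⊕ᵥ y) = 0 ↔ G *ᵥ y = 0 ∧ x = -(((toRF A)⁻¹ * toRF B) *ᵥ y) := by
    subst hP hG
    rw [toRF_fromBlocks, toRF_neg]
    exact fromBlocks_mulVec_sumElim_eq_zero_iff hAu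
  have hlift : ∀ {k : ℕ} (N : Matrix (Fin m) (Fin k) F[X]), G * toRF N = 0 →
      ∃ K : Matrix (Fin n) (Fin k) F[X], toRF K = -((toRF A)⁻¹ * toRF B * toRF N) := by
    intro k N hN
    refine ⟨(Y * D - X * B) * N, ?_⟩
    rw [toRF_mul, toRF_sub, toRF_mul, toRF_mul]
    refine sub_mul_eq_neg_inv_mul_mul hAu ?_ (hG ▸ hN)
    rw [← toRF_mul, ← toRF_mul, ← toRF_add, hXY, toRF_one]
  obtain ⟨hH₁, hH₂⟩ := (isRightMinimalBasis_fromRows_iff hker hproper hlift).1 hmin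
  exact ⟨hH₂, hH₁, hasRightMinimalIndices_iff_of_negGraph hker hproper hlift⟩

end
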